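/- Let Λ ⊂ ℂ be a lattice with End(ℂ/Λ) = ℤ (i.e., {z : zΛ ⊆ Λ} = ℤ), p prime, λ₁, λ₂ ∈ p⁻¹Λ mapping to independent p-torsion points of ℂ/Λ, and M = ℤ(λ₁, λ₂)ᵀ + Λ². Then the ring of ℂ-linear endomorphisms of ℂ² preserving M equals the set of integer matrices (a b; c d) with a ≡ d, b ≡ 0, c ≡ 0 (mod p) — i.e., ℤ·I + p·M₂(ℤ). -/

import Mathlib

/-! If `Z` preserves `M = ℤλ + Λ²`, then, as `pM ⊆ Λ² ⊆ M`, every entry of `pZ` multiplies `Λ` into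
itself and hence is an integer. Applying `Z` to `λ` gives `Zλ ≡ kλ (mod Λ²)` for some integer `k`.
After multiplying by `p`, independence of the `λᵢ` modulo `Λ` shows that `p` divides the integer
matrix `pZ`, so `Z` is integral; applied once more to `Zλ ≡ kλ` it gives `Z ≡ kI (mod p)`.
Conversely `kI + pN` preserves `M` because `pM ⊆ Λ²`. -/

open Matrix

section ExtLattice

variable {K ι : Type*} [CommRing K] {Λ : Submodule ℤ K} {lam : ι → K} {p : ℕ}

def extLattice (Λ : Submodule ℤ K) (lam : ι → K) : Set (ι → K) :=
  {v | ∃ (j : ℤ) (w : ι → K), (∀ i, w i ∈ Λ) ∧ v = j • lam + w}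

theorem intCast_mul_mem (a : ℤ) {x : K} (hx : x ∈ Λ) : (a : K) * x ∈ Λ := by
  simpa [zsmul_eq_mul] using Λ.smul_mem a hx

theorem natCast_mul_mem (n : ℕ) {x : K} (hx : x ∈ Λ) : (n : K) * x ∈ Λ := by
  exact_mod_cast intCast_mul_mem (n : ℤ) hx

theorem mem_extLattice_iff {v : ι → K} :
    v ∈ extLattice Λ lam ↔ ∃ j : ℤ, ∀ i, v i - j * lam i ∈ Λ := by
  constructor
  · rintro ⟨j, w, hw, rfl⟩
    exact ⟨j, fun i => by simpa [zsmul_eq_mul] using hw i⟩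
  · rintro ⟨j, hj⟩
    exact ⟨j, fun i => v i - j * lam i, hj, by ext i; simp [zsmul_eq_mul]⟩

theorem self_mem_extLattice : lam ∈ extLattice Λ lam :=
  mem_extLattice_iff.2 ⟨1, fun i => by simp⟩

theorem single_mem_extLattice [DecidableEq ι] (j : ι) {x : K} (hx : x ∈ Λ) :
    Pi.single j x ∈ extLattice Λ lam :=
  mem_extLattice_iff.2 ⟨0, fun i => by
    rcases eq_or_ne i j with rfl | hij
    · simpa using hx
    · simp [hij]⟩

theorem natCast_mul_mem_of_mem_extLattice (hlam : ∀ i, (p : K) * lam i ∈ Λ) {v : ι → K}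
    (hv : v ∈ extLattice Λ lam) (i : ι) : (p : K) * v i ∈ Λ := by
  obtain ⟨j, hj⟩ := mem_extLattice_iff.1 hv
  have h : (p : K) * v i = p * (v i - j * lam i) + j * (p * lam i) := by ring
  exact h ▸ Λ.add_mem (natCast_mul_mem p (hj i)) (intCast_mul_mem j (hlam i))

theorem mulVec_mem_extLattice [Fintype ι] [DecidableEq ι] (hlam : ∀ i, (p : K) * lam i ∈ Λ)
    (k : ℤ) (N : Matrix ι ι ℤ) {v : ι → K} (hv : v ∈ extLattice Λ lam) :
    ((k : K) • (1 : Matrix ι ι K) + (p : K) • N.map Int.cast) *ᵥ v ∈ extLattice Λ lam := by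
  obtain ⟨j, hj⟩ := mem_extLattice_iff.1 hv
  refine mem_extLattice_iff.2 ⟨k * j, fun i => ?_⟩
  have h : (((k : K) • (1 : Matrix ι ι K) + (p : K) • N.map Int.cast) *ᵥ v) i
      - ((k * j : ℤ) : K) * lam i = k * (v i - j * lam i) + ∑ l, (N i l : K) * (p * v l) := by
    rw [add_mulVec, smul_mulVec, smul_mulVec, one_mulVec]
    simp only [Pi.add_apply, Pi.smul_apply, smul_eq_mul, mulVec, dotProduct, map_apply,
      Finset.mul_sum, Int.cast_mul, mul_left_comm (p : K)]
    ring
  rw [h]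
  exact Λ.add_mem (intCast_mul_mem k (hj i)) (Λ.sum_mem fun l _ =>
    intCast_mul_mem _ (natCast_mul_mem_of_mem_extLattice hlam hv l))

theorem exists_natCast_mul_apply_eq_intCast [Fintype ι]
    (hCM : ∀ z : K, (∀ x ∈ Λ, z * x ∈ Λ) → ∃ n : ℤ, z = n) (hlam : ∀ i, (p : K) * lam i ∈ Λ)
    {Z : Matrix ι ι K} (hZ : Set.MapsTo (Z *ᵥ ·) (extLattice Λ lam) (extLattice Λ lam)) (i j : ι) :
    ∃ a : ℤ, (p : K) * Z i j = a := by
  classical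
  refine hCM _ fun x hx => ?_
  have h := natCast_mul_mem_of_mem_extLattice hlam (hZ (single_mem_extLattice j hx)) i
  simpa [mul_assoc] using h

theorem dvd_sub_smul_one_apply [Fintype ι] [DecidableEq ι]
    (hind : ∀ a : ι → ℤ, ∑ i, (a i : K) * lam i ∈ Λ → ∀ i, (p : ℤ) ∣ a i)
    {C : Matrix ι ι ℤ} {k : ℤ} (hC : ∀ i, (C.map Int.cast *ᵥ lam) i - k * lam i ∈ Λ) (i j : ι) :
    (p : ℤ) ∣ (C - k • 1) i j := by
  refine hind (fun j => (C - k • 1) i j) ?_ j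
  convert hC i using 1
  simp only [Matrix.sub_apply, Matrix.smul_apply, one_apply, smul_eq_mul]
  simp [mulVec, dotProduct, sub_mul, Finset.sum_sub_distrib]

theorem exists_map_intCast_eq_smul_one_add_smul [DecidableEq ι] {R : Type*} [Ring R]
    {C : Matrix ι ι ℤ} {k : ℤ}
    (h : ∀ i j, (p : ℤ) ∣ (C - k • 1) i j) :
    ∃ N : Matrix ι ι ℤ, C.map (Int.cast : ℤ → R) = (k : R) • 1 + (p : R) • N.map Int.cast := by
  choose N hN using h
  refine ⟨Matrix.of N, ?_⟩
  ext i j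
  have hij := hN i j
  simp only [Matrix.sub_apply, Matrix.smul_apply, one_apply, smul_eq_mul] at hij
  simp only [map_apply, Matrix.add_apply, Matrix.smul_apply, one_apply, of_apply, smul_eq_mul]
  rw [eq_add_of_sub_eq hij]
  split_ifs <;> simp [add_comm]

theorem exists_eq_smul_one_add_smul_of_mapsTo [IsDomain K] [CharZero K] [Fintype ι]
    [DecidableEq ι]
    (hCM : ∀ z : K, (∀ x ∈ Λ, z * x ∈ Λ) → ∃ n : ℤ, z = n) (hp : p ≠ 0)
    (hlam : ∀ i, (p : K) * lam i ∈ Λ)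
    (hind : ∀ a : ι → ℤ, ∑ i, (a i : K) * lam i ∈ Λ → ∀ i, (p : ℤ) ∣ a i)
    {Z : Matrix ι ι K} (hZ : Set.MapsTo (Z *ᵥ ·) (extLattice Λ lam) (extLattice Λ lam)) :
    ∃ (k : ℤ) (N : Matrix ι ι ℤ), Z = (k : K) • 1 + (p : K) • N.map Int.cast := by
  choose A hA using exists_natCast_mul_apply_eq_intCast hCM hlam hZ
  have hpZ : (p : K) • Z = (of A).map Int.cast := by ext i j; exact hA i j
  obtain ⟨k, hk⟩ := mem_extLattice_iff.1 (hZ self_mem_extLattice)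
  have hA_dvd : ∀ i j, (p : ℤ) ∣ A i j := by
    intro i j
    have h := dvd_sub_smul_one_apply hind (C := of A) (k := p * k) (fun i => by
      rw [← hpZ, smul_mulVec, Pi.smul_apply, smul_eq_mul]
      convert natCast_mul_mem p (hk i) using 1
      push_cast
      ring) i j
    rwa [Matrix.sub_apply, Matrix.smul_apply, of_apply, dvd_sub_left] at h
    exact Dvd.dvd.mul_right (dvd_mul_right _ _) _
  choose B hB using hA_dvd
  have hZB : Z = (of B).map Int.cast := by
    ext i j
    have h := hA i j
    rw [hB i j, Int.cast_mul, Int.cast_natCast] at h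
    exact mul_left_cancel₀ (Nat.cast_ne_zero.2 hp) h
  obtain ⟨N, hN⟩ := exists_map_intCast_eq_smul_one_add_smul (R := K)
    (dvd_sub_smul_one_apply hind (C := of B) (k := k) (fun i => hZB ▸ hk i))
  exact ⟨k, N, hZB.trans hN⟩

theorem mapsTo_mulVec_extLattice_iff [IsDomain K] [CharZero K] [Fintype ι]
    [DecidableEq ι]
    (hCM : ∀ z : K, (∀ x ∈ Λ, z * x ∈ Λ) → ∃ n : ℤ, z = n) (hp : p ≠ 0)
    (hlam : ∀ i, (p : K) * lam i ∈ Λ)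
    (hind : ∀ a : ι → ℤ, ∑ i, (a i : K) * lam i ∈ Λ → ∀ i, (p : ℤ) ∣ a i) (Z : Matrix ι ι K) :
    Set.MapsTo (Z *ᵥ ·) (extLattice Λ lam) (extLattice Λ lam) ↔
      ∃ (k : ℤ) (N : Matrix ι ι ℤ), Z = (k : K) • 1 + (p : K) • N.map Int.cast := by
  refine ⟨exists_eq_smul_one_add_smul_of_mapsTo hCM hp hlam hind, ?_⟩
  rintro ⟨k, N, rfl⟩ v hv
  exact mulVec_mem_extLattice hlam k N hv

end ExtLattice

theorem stmt_14_general (Λ : Submodule ℤ ℂ)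
    (hCM : ∀ z : ℂ, (∀ x ∈ Λ, z * x ∈ Λ) ↔ ∃ n : ℤ, z = (n : ℂ))
    (p : ℕ) (hp : p.Prime) (lam1 lam2 : ℂ)
    (h1 : (p : ℂ) * lam1 ∈ Λ) (h2 : (p : ℂ) * lam2 ∈ Λ)
    (hind : ∀ a b : ℤ, (a : ℂ) * lam1 + (b : ℂ) * lam2 ∈ Λ → (p : ℤ) ∣ a ∧ (p : ℤ) ∣ b)
    (M : Set (Fin 2 → ℂ))
    (hM : M = {v | ∃ (j : ℤ) (w : Fin 2 → ℂ), (∀ i, w i ∈ Λ) ∧ v = j • ![lam1, lam2] + w}) :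
    ∀ Z : Matrix (Fin 2) (Fin 2) ℂ,
      (∀ v ∈ M, Z.mulVec v ∈ M) ↔
        ∃ (k : ℤ) (N : Matrix (Fin 2) (Fin 2) ℤ),
          Z = (k : ℂ) • (1 : Matrix (Fin 2) (Fin 2) ℂ) + (p : ℂ) • (N.map (Int.cast : ℤ → ℂ)) := by
  subst hM
  have hlam : ∀ i, (p : ℂ) * ![lam1, lam2] i ∈ Λ := Fin.forall_fin_two.2 ⟨h1, h2⟩
  have hind' : ∀ a : Fin 2 → ℤ, ∑ i, (a i : ℂ) * ![lam1, lam2] i ∈ Λ → ∀ i, (p : ℤ) ∣ a i := by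
    intro a ha
    rw [Fin.sum_univ_two] at ha
    exact Fin.forall_fin_two.2 (hind (a 0) (a 1) ha)
  exact mapsTo_mulVec_extLattice_iff (fun z => (hCM z).1) hp.ne_zero hlam hind'

theorem stmt_14 (Λ : Submodule ℤ ℂ) (bΛ : Module.Basis (Fin 2) ℤ Λ)
    (hspan : Submodule.span ℝ (Λ : Set ℂ) = ⊤)
    (hCM : ∀ z : ℂ, (∀ x ∈ Λ, z * x ∈ Λ) ↔ ∃ n : ℤ, z = (n : ℂ))
    (p : ℕ) (hp : p.Prime) (lam1 lam2 : ℂ)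
    (h1 : (p : ℂ) * lam1 ∈ Λ) (h2 : (p : ℂ) * lam2 ∈ Λ)
    (hind : ∀ a b : ℤ, (a : ℂ) * lam1 + (b : ℂ) * lam2 ∈ Λ → (p : ℤ) ∣ a ∧ (p : ℤ) ∣ b)
    (M : Set (Fin 2 → ℂ))
    (hM : M = {v | ∃ (j : ℤ) (w : Fin 2 → ℂ), (∀ i, w i ∈ Λ) ∧ v = j • ![lam1, lam2] + w}) :
    ∀ Z : Matrix (Fin 2) (Fin 2) ℂ,
      (∀ v ∈ M, Z.mulVec v ∈ M) ↔
        ∃ (k : ℤ) (N : Matrix (Fin 2) (Fin 2) ℤ),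
          Z = (k : ℂ) • (1 : Matrix (Fin 2) (Fin 2) ℂ) + (p : ℂ) • (N.map (Int.cast : ℤ → ℂ)) :=
  stmt_14_general Λ hCM p hp lam1 lam2 h1 h2 hind M hM
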